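/- Let F be a group, let G be an abelian irreducible F-group, let m ≥ 1 be an integer, and let N be a normal F-subgroup of G^m. Let Π : G^m → G^{m−1} be the projection onto the first m−1 coordinates and π_m : G^m → G the projection onto the last coordinate. Then N = G^m if and only if Π(N) = G^{m−1} and there is no group homomorphism ψ : G^{m−1} → G such that π_m(x) = ψ(Π(x)) for all x ∈ N. -/

import Mathlib

/-!
Let `K ≤ G` be the set of `g` with `(1, …, 1, g) ∈ N`. It is a normal `F`-subgroup of `G`, so by
irreducibility `K = ⊥` or `K = ⊤`. If `K = ⊤`, then `N` contains the kernel of the projection `Π`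
onto the first `m - 1` coordinates, so `Π(N) = G^{m-1}` forces `N = G^m`. If `K = ⊥`, then `Π` is
injective on `N`, so the last coordinate factors through `Π(N)` via a homomorphism `ψ`.
-/

section FGroupDefs

variable (F : Type*) [Group F]

/-- A subgroup of an `F`-group is a *normal `F`-subgroup* if it is normal and
stable under the `F`-action. -/
def IsNormalFSubgroup {G : Type*} [Group G] [MulDistribMulAction F G]
    (H : Subgroup G) : Prop :=
  H.Normal ∧ ∀ (f : F) (x : G), x ∈ H → f • x ∈ H

/-- An *irreducible `F`-group* is a nontrivial `F`-group whose only normal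
`F`-subgroups are the trivial subgroup and the whole group. -/
def IsIrreducibleFGroup (G : Type*) [Group G] [MulDistribMulAction F G] : Prop :=
  Nontrivial G ∧ ∀ H : Subgroup G, IsNormalFSubgroup F H → H = ⊥ ∨ H = ⊤

/-- `[s]_F`: the smallest normal `F`-subgroup containing the set `s`. -/
def normalFClosure {G : Type*} [Group G] [MulDistribMulAction F G] (s : Set G) :
    Subgroup G :=
  sInf {H : Subgroup G | IsNormalFSubgroup F H ∧ s ⊆ H}

/-- A group homomorphism is an `F`-group morphism if it commutes with the `F`-actions. -/
def IsFHom {G G' : Type*} [Group G] [Group G'] [MulDistribMulAction F G]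
    [MulDistribMulAction F G'] (φ : G →* G') : Prop :=
  ∀ (f : F) (x : G), φ (f • x) = f • φ x

/-- `h_F(G)`: the number of `F`-group endomorphisms of `G`. -/
noncomputable def hF (G : Type*) [Group G] [MulDistribMulAction F G] : ℕ :=
  Nat.card {φ : G →* G // IsFHom F φ}

/-- Two `F`-groups are isomorphic if there is a bijective group homomorphism
between them commuting with the `F`-actions. -/
def IsFIso (G G' : Type*) [Group G] [Group G'] [MulDistribMulAction F G]
    [MulDistribMulAction F G'] : Prop :=
  ∃ e : G ≃* G', ∀ (f : F) (x : G), e (f • x) = f • e x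

end FGroupDefs

/-- Projection of `G^m` onto its first `m - 1` coordinates, as a group homomorphism. -/
def firstCoordsHom {G : Type*} [Group G] (m : ℕ) : (Fin m → G) →* (Fin (m - 1) → G) where
  toFun x i := x (Fin.castLE (Nat.sub_le m 1) i)
  map_one' := rfl
  map_mul' _ _ := rfl

theorem Subgroup.eq_top_of_map_eq_top_of_ker_le {A B : Type*} [Group A] [Group B]
    {f : A →* B} {N : Subgroup A} (hmap : N.map f = ⊤) (hker : f.ker ≤ N) : N = ⊤ := by
  rw [← Subgroup.comap_map_eq_self hker, hmap, Subgroup.comap_top]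

theorem MonoidHom.exists_factor_on_of_map_eq_top {A B C : Type*} [Group A] [Group B] [Group C]
    {f : A →* B} {g : A →* C} {N : Subgroup A} (hmap : N.map f = ⊤) (hker : N ⊓ f.ker ≤ g.ker) :
    ∃ ψ : B →* C, ∀ x ∈ N, g x = ψ (f x) := by
  have hsurj : Function.Surjective (f.comp N.subtype) := by
    rw [← MonoidHom.range_eq_top, MonoidHom.range_comp, Subgroup.range_subtype, hmap]
  have hker' : (f.comp N.subtype).ker ≤ (g.comp N.subtype).ker := fun x hfx =>
    hker (Subgroup.mem_inf.mpr ⟨x.2, hfx⟩)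
  refine ⟨(f.comp N.subtype).liftOfSurjective hsurj (Subtype.mk _ hker'), fun x hx => ?_⟩
  exact ((f.comp N.subtype).liftOfRightInverse_comp_apply _ _ (Subtype.mk _ hker') ⟨x, hx⟩).symm

theorem IsNormalFSubgroup.comap {F G G' : Type*} [Group F] [Group G] [Group G']
    [MulDistribMulAction F G] [MulDistribMulAction F G'] {H : Subgroup G'}
    (hH : IsNormalFSubgroup F H) {φ : G →* G'} (hφ : IsFHom F φ) :
    IsNormalFSubgroup F (H.comap φ) :=
  ⟨hH.1.comap φ, fun f x hx => by rw [Subgroup.mem_comap, hφ]; exact hH.2 f _ hx⟩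

theorem isFHom_mulSingle (F : Type*) {ι : Type*} [Group F] [DecidableEq ι] (G : ι → Type*)
    [∀ i, Group (G i)] [∀ i, MulDistribMulAction F (G i)] (i : ι) :
    IsFHom F (MonoidHom.mulSingle G i) := fun f x => by
  funext j
  simp only [MonoidHom.mulSingle_apply, Pi.smul_apply]
  exact (Pi.apply_mulSingle (fun _ => (f • ·)) (fun _ => smul_one f) i x j).symm

theorem firstCoordsHom_surjective {G : Type*} [Group G] (m : ℕ) :
    Function.Surjective (firstCoordsHom (G := G) m) :=
  (Fin.castLE_injective _).surjective_comp_right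

theorem ker_firstCoordsHom {G : Type*} [Group G] {m : ℕ} (i : Fin m) (hi : (i : ℕ) = m - 1) :
    (firstCoordsHom (G := G) m).ker = (MonoidHom.mulSingle (fun _ => G) i).range := by
  have hlt : ∀ j : Fin m, j ≠ i → (j : ℕ) < m - 1 := fun j hj => by
    have := Fin.val_ne_of_ne hj
    omega
  ext x
  constructor
  · intro hx
    refine ⟨x i, funext fun j => ?_⟩
    rw [MonoidHom.mulSingle_apply]
    rcases eq_or_ne j i with rfl | hj
    · exact Pi.mulSingle_eq_same j _
    · rw [Pi.mulSingle_eq_of_ne hj]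
      exact (congrFun hx ⟨j, hlt j hj⟩).symm
  · rintro ⟨g, rfl⟩
    funext j
    refine Pi.mulSingle_eq_of_ne (M := fun _ => G) (fun h => ?_) g
    have : (j : ℕ) = i := congrArg Fin.val h
    omega

theorem normalFSubgroup_top_iff_abelian_general
    {F G : Type*} [Group F] [Group G] [MulDistribMulAction F G]
    (hirr : IsIrreducibleFGroup F G)
    (m : ℕ) (hm : 1 ≤ m) (N : Subgroup (Fin m → G))
    (hN : IsNormalFSubgroup F N) :
    N = ⊤ ↔
      (Subgroup.map (firstCoordsHom m) N = ⊤ ∧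
        ¬ ∃ ψ : (Fin (m - 1) → G) →* G, ∀ x ∈ N,
          x ⟨m - 1, Nat.sub_lt (Nat.lt_of_lt_of_le Nat.zero_lt_one hm) Nat.zero_lt_one⟩ =
            ψ (fun i => x (Fin.castLE (Nat.sub_le m 1) i))) := by
  set last : Fin m := ⟨m - 1, by omega⟩
  have hker := ker_firstCoordsHom (G := G) last rfl
  set K := N.comap (MonoidHom.mulSingle (fun _ => G) last)
  constructor
  · rintro rfl
    refine ⟨Subgroup.map_top_of_surjective _ (firstCoordsHom_surjective m), fun ⟨ψ, hψ⟩ => ?_⟩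
    have : Nontrivial G := hirr.1
    obtain ⟨g, hg⟩ := exists_ne (1 : G)
    set e := MonoidHom.mulSingle (fun _ => G) last
    have hg1 : firstCoordsHom m (e g) = 1 := hker.ge (MonoidHom.mem_range.mpr ⟨g, rfl⟩)
    have hlast : e g last = ψ 1 := hg1 ▸ hψ (e g) trivial
    rw [MonoidHom.mulSingle_apply, Pi.mulSingle_eq_same, map_one] at hlast
    exact hg hlast
  · rintro ⟨hmap, hnofactor⟩
    rcases hirr.2 K (hN.comap (isFHom_mulSingle F _ last)) with hK | hK
    · refine (hnofactor (MonoidHom.exists_factor_on_of_map_eq_top (g := Pi.evalMonoidHom _ last)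
        hmap fun x hx => ?_)).elim
      obtain ⟨hxN, hx⟩ := Subgroup.mem_inf.mp hx
      obtain ⟨g, rfl⟩ := hker ▸ hx
      have : g ∈ K := hxN
      simpa [hK] using this
    · refine Subgroup.eq_top_of_map_eq_top_of_ker_le hmap ?_
      rw [hker, MonoidHom.range_eq_map, Subgroup.map_le_iff_le_comap]
      exact hK.ge

/-- for an abelian irreducible `F`-group `G` and `m ≥ 1`, a normal
`F`-subgroup `N` of `G^m` is everything iff it projects onto `G^{m-1}` and the last
coordinate does not factor through the projection onto the first `m - 1` coordinates
on `N`. -/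
theorem normalFSubgroup_top_iff_abelian
    {F G : Type*} [Group F] [Group G] [MulDistribMulAction F G]
    (hirr : IsIrreducibleFGroup F G)
    (hab : ∀ a b : G, a * b = b * a)
    (m : ℕ) (hm : 1 ≤ m) (N : Subgroup (Fin m → G))
    (hN : IsNormalFSubgroup F N) :
    N = ⊤ ↔
      (Subgroup.map (firstCoordsHom m) N = ⊤ ∧
        ¬ ∃ ψ : (Fin (m - 1) → G) →* G, ∀ x ∈ N,
          x ⟨m - 1, Nat.sub_lt (Nat.lt_of_lt_of_le Nat.zero_lt_one hm) Nat.zero_lt_one⟩ =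
            ψ (fun i => x (Fin.castLE (Nat.sub_le m 1) i))) :=
  normalFSubgroup_top_iff_abelian_general hirr m hm N hN
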